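/- arXiv:math/0409426 — 2 statements merged into one kernel-verified Lean document; each statement's English description precedes it below -/
import Mathlib

section
/- The map f : ℂ² → ℂ³ defined by f(x,y) = (y³ + x², x, y²) is injective. -/
/-- The map `f : ℂ² → ℂ³` defined by `f(x,y) = (y³ + x², x, y²)` is injective. -/
theorem stmt_0 :
    Function.Injective (fun p : ℂ × ℂ => (p.2 ^ 3 + p.1 ^ 2, p.1, p.2 ^ 2) : ℂ × ℂ → ℂ × ℂ × ℂ) := by
  rintro ⟨x, y⟩ ⟨x', y'⟩ h
  simp only [Prod.mk.injEq] at h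
  obtain ⟨h1, h2, h3⟩ := h
  subst h2
  have hy3 : y ^ 3 = y' ^ 3 := by linear_combination h1
  have hy : y = y' := by
    by_cases hy0 : y' = 0
    · subst hy0
      simpa using pow_eq_zero_iff (n := 2) (by norm_num) |>.mp (by simpa using h3)
    · have : y' ^ 2 ≠ 0 := pow_ne_zero _ hy0
      have key : y * y' ^ 2 = y' * y' ^ 2 := by
        linear_combination hy3 - y * h3
      exact mul_right_cancel₀ this key
  simp [hy]
end

section
/- In the formal power series ring ℂ[[w₁,w₂,w₃]], the element ∂F/∂w₁ = 2(w₁ − w₂²) does not belong to the ideal generated by w₁, ∂F/∂w₂ = −4w₂(w₁ − w₂²), and ∂F/∂w₃ = −3w₃². -/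
/-!
On the `w₂`-axis `w₁ = w₃ = 0` the generators `w₁`, `−4w₂(w₁ − w₂²)`, `−3w₃²` restrict to
`0`, `4t³`, `0`, so the whole ideal restricts into `(t³) ⊆ ℂ[[t]]`, whereas
`2(w₁ − w₂²)` restricts to `−2t²`, which `t³` does not divide.
-/

open MvPowerSeries

theorem PowerSeries.C_mul_X_pow_notMem_span_X_pow {R : Type*} [CommSemiring R] {c : R} (hc : c ≠ 0)
    {m n : ℕ} (hmn : m < n) : C c * X ^ m ∉ Ideal.span {(X : PowerSeries R) ^ n} := by
  rw [Ideal.mem_span_singleton, X_pow_dvd_iff]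
  intro hdvd
  simpa [coeff_C_mul_X_pow, hc] using hdvd m hmn

section W₂Axis

variable {R : Type*} [CommRing R]

noncomputable def restrictToW₂Axis : MvPowerSeries (Fin 3) R →ₐ[R] PowerSeries R :=
  substAlgHom (a := ![0, PowerSeries.X, 0]) <| hasSubst_of_constantCoeff_zero <| by
    intro i; fin_cases i <;> simp [PowerSeries.X]

@[simp]
theorem restrictToW₂Axis_X (i : Fin 3) :
    restrictToW₂Axis (X i : MvPowerSeries (Fin 3) R) = ![0, PowerSeries.X, 0] i :=
  substAlgHom_X _ i

theorem span_le_comap_restrictToW₂Axis :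
    Ideal.span ({X 0, -4 * X 1 * (X 0 - X 1 ^ 2), -3 * X 2 ^ 2} :
        Set (MvPowerSeries (Fin 3) R)) ≤
      (Ideal.span {PowerSeries.X ^ 3}).comap restrictToW₂Axis := by
  rw [Ideal.span_le]
  rintro f (rfl | rfl | rfl) <;> simp [Ideal.mem_span_singleton, map_ofNat]
  exact ⟨4, by ring⟩

theorem restrictToW₂Axis_two_mul_sub :
    restrictToW₂Axis (2 * (X 0 - X 1 ^ 2) : MvPowerSeries (Fin 3) R) =
      -(PowerSeries.C (2 : R) * PowerSeries.X ^ 2) := by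
  simp [map_ofNat]

end W₂Axis

/-- In `ℂ[[w₁,w₂,w₃]]`, the partial derivative `∂F/∂w₁ = 2(w₁ − w₂²)` of
`F = (w₁ − w₂²)² − w₃³` does not belong to the ideal generated by `w₁`,
`∂F/∂w₂ = −4w₂(w₁ − w₂²)` and `∂F/∂w₃ = −3w₃²`. -/
theorem stmt_9 :
    (2 * (X 0 - X 1 ^ 2) : MvPowerSeries (Fin 3) ℂ) ∉
      Ideal.span ({X 0, -4 * X 1 * (X 0 - X 1 ^ 2), -3 * X 2 ^ 2} :
        Set (MvPowerSeries (Fin 3) ℂ)) := by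
  intro hmem
  have hrestrict := span_le_comap_restrictToW₂Axis hmem
  rw [Ideal.mem_comap, restrictToW₂Axis_two_mul_sub, neg_mem_iff] at hrestrict
  exact PowerSeries.C_mul_X_pow_notMem_span_X_pow two_ne_zero (by norm_num) hrestrict
end
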